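/- Let F be an Oka family of ideals in a ring R such that every nonempty chain of ideals in the complement F' has an upper bound in F'. If F0 is a semifilter of ideals such that every prime ideal in F0 belongs to F, then F0 ⊆ F. -/
import Mathlib


variable {R : Type*} [Ring R]

/-- A left ideal `I` is two-sided if it is also closed under right multiplication. -/
def IsTwoSided (I : Ideal R) : Prop := ∀ x ∈ I, ∀ r : R, x * r ∈ I

/-- The two-sided ideal `(a)` generated by an element `a`. -/
def twoGen (a : R) : Ideal R := Ideal.span {x : R | ∃ r s : R, x = r * a * s}


lemma mem_twoGen (r a s : R) : r * a * s ∈ twoGen a :=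
  Ideal.subset_span ⟨r, s, rfl⟩

lemma self_mem_twoGen (a : R) : a ∈ twoGen a := by
  simpa using mem_twoGen 1 a 1

lemma twoGen_two_sided (a : R) : IsTwoSided (twoGen a) := by
  intro x hx t
  induction hx using Submodule.span_induction with
  | mem x hx => obtain ⟨r, s, rfl⟩ := hx; simpa [mul_assoc] using mem_twoGen r a (s * t)
  | zero => simp
  | add x y _ _ hx hy => simpa [add_mul] using (twoGen a).add_mem hx hy
  | smul c x _ hx => simpa [smul_eq_mul, mul_assoc] using (twoGen a).mul_mem_left c hx

lemma twoGen_le {A : Ideal R} (hA : IsTwoSided A) {a : R} (ha : a ∈ A) :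
    twoGen a ≤ A := by
  refine Ideal.span_le.2 ?_
  rintro x ⟨r, s, rfl⟩
  exact hA _ (A.mul_mem_left r ha) s

/-- The ideal `(a)⁻¹I = {x : R | (a)·x ⊆ I}`. -/
def preQuot (a : R) (I : Ideal R) : Ideal R where
  carrier := {x : R | ∀ r s : R, r * a * s * x ∈ I}
  add_mem' := by
    intro x y hx hy r s
    simpa [mul_add] using I.add_mem (hx r s) (hy r s)
  zero_mem' := by
    intro r s
    simpa using I.zero_mem
  smul_mem' := by
    intro c x hx r s
    have := hx r (s * c)
    simpa [smul_eq_mul, mul_assoc] using this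

/-- The ideal `I(a)⁻¹ = {x : R | x·(a) ⊆ I}`. -/
def postQuot (a : R) (I : Ideal R) : Ideal R where
  carrier := {x : R | ∀ r s : R, x * (r * a * s) ∈ I}
  add_mem' := by
    intro x y hx hy r s
    simpa [add_mul] using I.add_mem (hx r s) (hy r s)
  zero_mem' := by
    intro r s
    simpa using I.zero_mem
  smul_mem' := by
    intro c x hx r s
    simpa [smul_eq_mul, mul_assoc] using I.mul_mem_left c (hx r s)


lemma sup_two_sided {I J : Ideal R} (hI : IsTwoSided I) (hJ : IsTwoSided J) :
    IsTwoSided (I ⊔ J) := by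
  intro x hx t
  rw [Submodule.mem_sup] at hx ⊢
  obtain ⟨y, hy, z, hz, rfl⟩ := hx
  exact ⟨y * t, hI y hy t, z * t, hJ z hz t, (add_mul y z t).symm⟩

lemma preQuot_two_sided {I : Ideal R} (hI : IsTwoSided I) (a : R) :
    IsTwoSided (preQuot a I) := by
  intro x hx t r s
  have := hI _ (hx r s) t
  simpa [mul_assoc] using this

lemma postQuot_two_sided (I : Ideal R) (a : R) : IsTwoSided (postQuot a I) := by
  intro x hx t r s
  have := hx (t * r) s
  simpa [mul_assoc] using this

lemma le_preQuot (I : Ideal R) (a : R) : I ≤ preQuot a I := by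
  intro x hx r s
  exact I.mul_mem_left _ hx

lemma le_postQuot {I : Ideal R} (hI : IsTwoSided I) (a : R) : I ≤ postQuot a I := by
  intro x hx r s
  have h1 : x * r ∈ I := hI x hx r
  have h2 : x * r * a ∈ I := hI _ h1 a
  have h3 : x * r * a * s ∈ I := hI _ h2 s
  simpa [mul_assoc] using h3

/-- A two-sided ideal `P` is prime: it is proper, and `AB ⊆ P` implies `A ⊆ P` or
`B ⊆ P` for two-sided ideals `A`, `B`. -/
def IsPrimeTwoSided (P : Ideal R) : Prop :=
  IsTwoSided P ∧ P ≠ ⊤ ∧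
    ∀ A B : Ideal R, IsTwoSided A → IsTwoSided B → A * B ≤ P → A ≤ P ∨ B ≤ P

/-- An Oka family of (two-sided) ideals: it contains `R`, and for every two-sided
ideal `I` and element `a`, if `(I,a)`, `(a)⁻¹I` and `I(a)⁻¹` all belong to the
family, then so does `I`. -/
def IsOka (F : Set (Ideal R)) : Prop :=
  (⊤ : Ideal R) ∈ F ∧
    ∀ I : Ideal R, IsTwoSided I → ∀ a : R,
      I ⊔ twoGen a ∈ F → preQuot a I ∈ F → postQuot a I ∈ F → I ∈ F


/-- **Prime Ideal Principle supplement.** Let `F` be an Oka family such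
that every nonempty chain of (two-sided) ideals in the complement of `F` has an upper
bound in the complement.  If `F₀` is a semifilter of two-sided ideals all of whose
prime members belong to `F`, then `F₀ ⊆ F`. -/
theorem prime_ideal_principle_supplement (F F₀ : Set (Ideal R)) (hF : IsOka F)
    (hchain : ∀ C : Set (Ideal R), C.Nonempty → (∀ I ∈ C, IsTwoSided I ∧ I ∉ F) →
      IsChain (· ≤ ·) C → ∃ B : Ideal R, IsTwoSided B ∧ B ∉ F ∧ ∀ I ∈ C, I ≤ B)
    (hF₀ts : ∀ I ∈ F₀, IsTwoSided I)
    (hsemifilter : ∀ I ∈ F₀, ∀ J : Ideal R, IsTwoSided J → I ≤ J → J ∈ F₀)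
    (hprimes : ∀ P ∈ F₀, IsPrimeTwoSided P → P ∈ F) :
    F₀ ⊆ F := by
  intro I₀ hI₀
  by_contra hI₀F
  -- Set of two-sided ideals containing I₀ and not in F
  set S : Set (Ideal R) := {J | IsTwoSided J ∧ J ∉ F ∧ I₀ ≤ J} with hS
  have hI₀S : I₀ ∈ S := ⟨hF₀ts I₀ hI₀, hI₀F, le_rfl⟩
  obtain ⟨P, hPI₀, hPS, hPmax⟩ : ∃ P, I₀ ≤ P ∧ P ∈ S ∧ ∀ J ∈ S, P ≤ J → J ≤ P := by
    obtain ⟨P, h1, h2⟩ := zorn_le_nonempty₀ S (fun c hcs hc y hy => by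
      obtain ⟨B, hBts, hBF, hBub⟩ := hchain c ⟨y, hy⟩
        (fun I hI => ⟨(hcs hI).1, (hcs hI).2.1⟩) hc
      exact ⟨B, ⟨hBts, hBF, (hcs hy).2.2.trans (hBub y hy)⟩, hBub⟩) I₀ hI₀S
    exact ⟨P, h1, h2.1, fun J hJ hPJ => h2.2 hJ hPJ⟩
  obtain ⟨hPts, hPF, _⟩ := hPS
  -- P belongs to F₀
  have hPF₀ : P ∈ F₀ := hsemifilter I₀ hI₀ P hPts hPI₀
  have hstrict : ∀ J : Ideal R, IsTwoSided J → P ≤ J → ∀ x, x ∈ J → x ∉ P → J ∈ F := by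
    intro J hJts hPJ x hxJ hxP
    by_contra hJF
    exact hxP (hPmax J ⟨hJts, hJF, hPI₀.trans hPJ⟩ hPJ hxJ)
  -- P is prime, hence in F: contradiction
  apply hPF
  apply hprimes P hPF₀
  refine ⟨hPts, ?_, ?_⟩
  · rintro rfl; exact hPF hF.1
  · intro A B hAts hBts hAB
    by_contra hcon
    push_neg at hcon
    obtain ⟨hA, hB⟩ := hcon
    obtain ⟨a, haA, haP⟩ := SetLike.not_le_iff_exists.1 hA
    obtain ⟨b, hbB, hbP⟩ := SetLike.not_le_iff_exists.1 hB
    have hab : twoGen a * twoGen b ≤ P :=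
      le_trans (Ideal.mul_mono (twoGen_le hAts haA) (twoGen_le hBts hbB)) hAB
    -- membership in F of (P, c) for any c ∉ P
    have hsupF : ∀ c : R, c ∉ P → P ⊔ twoGen c ∈ F := fun c hcP =>
      hstrict _ (sup_two_sided hPts (twoGen_two_sided c)) le_sup_left c
        (Submodule.mem_sup_right (self_mem_twoGen c)) hcP
    by_cases hcase : b ∈ postQuot a P
    · -- all three Oka ideals for the element a are in F
      have h1 : P ⊔ twoGen a ∈ F := hsupF a haP
      have h2 : preQuot a P ∈ F := by
        refine hstrict _ (preQuot_two_sided hPts a) (le_preQuot P a) b ?_ hbP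
        intro r s
        have : r * a * s * b ∈ twoGen a * twoGen b :=
          Ideal.mul_mem_mul (mem_twoGen r a s) (by simpa using mem_twoGen 1 b 1)
        exact hab this
      have h3 : postQuot a P ∈ F :=
        hstrict _ (postQuot_two_sided P a) (le_postQuot hPts a) b hcase hbP
      exact hPF (hF.2 P hPts a h1 h2 h3)
    · -- get c ∉ P with (c)(c) ⊆ P
      simp only [postQuot, Submodule.mem_mk, AddSubmonoid.mem_mk,
        AddSubsemigroup.mem_mk, Set.mem_setOf_eq, not_forall] at hcase
      obtain ⟨r, s, hcP⟩ := hcase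
      set c : R := b * (r * a * s) with hc
      have hca : c ∈ twoGen a := by
        have : (b * r) * a * s ∈ twoGen a := mem_twoGen (b * r) a s
        simpa [hc, mul_assoc] using this
      have hcb : c ∈ twoGen b := by
        have : (1 : R) * b * (r * a * s) ∈ twoGen b := mem_twoGen 1 b (r * a * s)
        simpa [hc] using this
      have hcc : twoGen c * twoGen c ≤ P :=
        le_trans (Ideal.mul_mono (twoGen_le (twoGen_two_sided a) hca)
          (twoGen_le (twoGen_two_sided b) hcb)) hab
      have h1 : P ⊔ twoGen c ∈ F := hsupF c hcP
      have h2 : preQuot c P ∈ F := by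
        refine hstrict _ (preQuot_two_sided hPts c) (le_preQuot P c) c ?_ hcP
        intro r' s'
        exact hcc (Ideal.mul_mem_mul (mem_twoGen r' c s')
          (by simpa using mem_twoGen 1 c 1))
      have h3 : postQuot c P ∈ F := by
        refine hstrict _ (postQuot_two_sided P c) (le_postQuot hPts c) c ?_ hcP
        intro r' s'
        exact hcc (Ideal.mul_mem_mul (by simpa using mem_twoGen 1 c 1)
          (mem_twoGen r' c s'))
      exact hPF (hF.2 P hPts c h1 h2 h3)
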